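/- Spinor representation of polarized degenerate 2-forms (key step in the proof of Theorem 2): every nonzero antisymmetric complex 4×4 matrix F satisfying ★F = −i F and det F = 0 can be written as F = F(ξ) for some nonzero ξ ∈ ℂ²; moreover ξ is unique up to sign, i.e. for nonzero ξ, ξ′ ∈ ℂ², F(ξ) = F(ξ′) if and only if ξ′ = ξ or ξ′ = −ξ. -/

import Mathlib

noncomputable section

open scoped Matrix

/-- Totally antisymmetric symbol, ε_{0123} = 1. -/
def eps (a b c d : Fin 4) : ℝ :=
  ∑ σ : Equiv.Perm (Fin 4),
    if σ 0 = a ∧ σ 1 = b ∧ σ 2 = c ∧ σ 3 = d then ((Equiv.Perm.sign σ : ℤ) : ℝ) else 0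

/-- η := diag(1,−1,−1,−1). -/
def ηM : Matrix (Fin 4) (Fin 4) ℝ :=
  !![1, 0, 0, 0; 0, -1, 0, 0; 0, 0, -1, 0; 0, 0, 0, -1]

/-- Pauli matrices s₀, s₁, s₂, s₃. -/
def sP : Fin 4 → Matrix (Fin 2) (Fin 2) ℂ :=
  ![!![1, 0; 0, 1], !![0, 1; 1, 0], !![0, Complex.I; -Complex.I, 0], !![1, 0; 0, -1]]

/-- The matrix E. -/
def EM : Matrix (Fin 2) (Fin 2) ℂ := !![0, 1; -1, 0]

/-- Second-order Pauli matrices σ_{jk} := (1/2)(s_j E s_kᵀ − s_k E s_jᵀ). -/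
def sig2 (j k : Fin 4) : Matrix (Fin 2) (Fin 2) ℂ :=
  (1/2 : ℂ) • (sP j * EM * (sP k)ᵀ - sP k * EM * (sP j)ᵀ)

/-- The spinor-to-2-form map F(ξ)_{jk} := σ_{jk ab} ξ^a ξ^b. -/
def Fspin (ξ : Fin 2 → ℂ) : Matrix (Fin 4) (Fin 4) ℂ :=
  Matrix.of fun j k => ∑ a : Fin 2, ∑ b : Fin 2, sig2 j k a b * ξ a * ξ b

/-- Minkowski Hodge star of an antisymmetric complex 4×4 matrix:
(★F)_{γδ} := (1/2) η^{αμ} η^{βν} F_{μν} ε_{αβγδ}. -/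
def hodge2 (F : Matrix (Fin 4) (Fin 4) ℂ) : Matrix (Fin 4) (Fin 4) ℂ :=
  Matrix.of fun γ δ => (1/2 : ℂ) *
    ∑ α : Fin 4, ∑ β : Fin 4, ∑ μ : Fin 4, ∑ ν : Fin 4,
      (ηM α μ : ℂ) * (ηM β ν : ℂ) * F μ ν * (eps α β γ δ : ℂ)

/-- l := (1,0,0,1). -/
def lV : Fin 4 → ℂ := ![1, 0, 0, 1]

/-- m := (0,1,i,0). -/
def mV : Fin 4 → ℂ := ![0, 1, Complex.I, 0]

/-!
An antisymmetric `F` with `★F = -iF` is determined by its row `(F₀₁, F₀₂, F₀₃)`, and `F(ξ)`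
depends on `ξ` only through the symmetric tensor `ξ ⊗ ξ`, with components
`(u, v, w) = (ξ⁰ξ⁰, ξ¹ξ¹, ξ⁰ξ¹)`; `Fsym u v w` is the linear parametrization of such forms that
matches both. In these coordinates `det F = -16 (w² - uv)²`, so `det F = 0` says that the
symmetric matrix `[[u, w], [w, v]]` is singular. Over `ℂ` such a matrix is `ξ ξᵀ` for some `ξ`,
and `ξ ξᵀ` determines `ξ` up to sign.
-/

theorem exists_sq_sq_mul_eq_of_sq_eq_mul {K : Type*} [Field K] [IsAlgClosed K] {u v w : K}
    (h : w ^ 2 = u * v) : ∃ ξ : Fin 2 → K, ξ 0 ^ 2 = u ∧ ξ 1 ^ 2 = v ∧ ξ 0 * ξ 1 = w := by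
  obtain ⟨x, hx⟩ := IsAlgClosed.exists_pow_nat_eq u two_pos
  by_cases hx0 : x = 0
  · obtain ⟨y, hy⟩ := IsAlgClosed.exists_pow_nat_eq v two_pos
    have hw : w = 0 := pow_eq_zero_iff two_ne_zero |>.1 (by rw [h, ← hx, hx0]; ring)
    exact ⟨![x, y], hx, hy, by simp [hx0, hw]⟩
  · refine ⟨![x, w / x], hx, ?_, by simp [mul_div_cancel₀ w hx0]⟩
    simp only [Matrix.cons_val_one, Matrix.cons_val_zero, div_pow, h, ← hx]
    field_simp

theorem sq_sq_mul_eq_iff_eq_or_eq_neg {R : Type*} [CommRing R] [IsDomain R]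
    {ξ ξ' : Fin 2 → R} :
    (ξ 0 ^ 2 = ξ' 0 ^ 2 ∧ ξ 1 ^ 2 = ξ' 1 ^ 2 ∧ ξ 0 * ξ 1 = ξ' 0 * ξ' 1) ↔
      ξ' = ξ ∨ ξ' = -ξ := by
  have hcomp : (ξ' = ξ ∨ ξ' = -ξ) ↔
      (ξ' 0 = ξ 0 ∧ ξ' 1 = ξ 1) ∨ (ξ' 0 = -ξ 0 ∧ ξ' 1 = -ξ 1) := by
    simp [funext_iff, Fin.forall_fin_two]
  rw [hcomp]
  constructor
  · rintro ⟨h0, h1, h01⟩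
    rcases sq_eq_sq_iff_eq_or_eq_neg.1 h0.symm with e0 | e0 <;>
      rcases sq_eq_sq_iff_eq_or_eq_neg.1 h1.symm with e1 | e1
    · exact .inl ⟨e0, e1⟩
    · rw [e0, e1] at h01
      rcases mul_eq_zero.1 (show ξ 0 * (ξ 1 + ξ 1) = 0 by linear_combination h01) with h | h
      · exact .inr ⟨by rw [e0, h, neg_zero], e1⟩
      · exact .inl ⟨e0, by linear_combination e1 - h⟩
    · rw [e0, e1] at h01
      rcases mul_eq_zero.1 (show (ξ 0 + ξ 0) * ξ 1 = 0 by linear_combination h01) with h | h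
      · exact .inl ⟨by linear_combination e0 - h, e1⟩
      · exact .inr ⟨e0, by rw [e1, h, neg_zero]⟩
    · exact .inr ⟨e0, e1⟩
  · rintro (⟨e0, e1⟩ | ⟨e0, e1⟩) <;> simp [e0, e1]

def Fsym (u v w : ℂ) : Matrix (Fin 4) (Fin 4) ℂ :=
  !![0, u - v, Complex.I * (u + v), -2 * w;
     -(u - v), 0, 2 * Complex.I * w, -(u + v);
     -(Complex.I * (u + v)), -(2 * Complex.I * w), 0, -(Complex.I * (u - v));
     2 * w, u + v, Complex.I * (u - v), 0]

theorem Fspin_eq_Fsym (ξ : Fin 2 → ℂ) : Fspin ξ = Fsym (ξ 0 ^ 2) (ξ 1 ^ 2) (ξ 0 * ξ 1) := by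
  ext j k
  fin_cases j <;> fin_cases k <;>
    simp [Fspin, sig2, sP, EM, Fsym, Matrix.mul_apply, Fin.sum_univ_two] <;> ring

theorem Fsym_inj {u v w u' v' w' : ℂ} :
    Fsym u v w = Fsym u' v' w' ↔ u = u' ∧ v = v' ∧ w = w' := by
  refine ⟨fun h => ?_, by rintro ⟨rfl, rfl, rfl⟩; rfl⟩
  have h01 : u - v = u' - v' := by simpa [Fsym] using congrFun (congrFun h 0) 1
  have h13 : u + v = u' + v' := by simpa [Fsym] using congrFun (congrFun h 3) 1
  have h03 : w = w' := by simpa [Fsym] using congrFun (congrFun h 0) 3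
  exact ⟨by linear_combination (h01 + h13) / 2, by linear_combination (h13 - h01) / 2, h03⟩

theorem det_Fsym (u v w : ℂ) : (Fsym u v w).det = -16 * (w ^ 2 - u * v) ^ 2 := by
  simp [Fsym, Matrix.det_succ_row_zero, Fin.sum_univ_succ, Fin.succAbove]
  linear_combination (16 * (w ^ 2 - u * v) ^ 2) * Complex.I_sq

theorem eps_eq_sum_sign (a b c d : Fin 4) :
    eps a b c d = ((∑ σ : Equiv.Perm (Fin 4),
      if σ 0 = a ∧ σ 1 = b ∧ σ 2 = c ∧ σ 3 = d then (Equiv.Perm.sign σ : ℤ) else 0 : ℤ) : ℝ) := by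
  simp [eps, apply_ite (fun z : ℤ => (z : ℝ))]

theorem eps_apply_zero (a b : Fin 4) :
    eps a b 0 1 = ((if a = 2 ∧ b = 3 then 1 else if a = 3 ∧ b = 2 then -1 else 0 : ℤ) : ℝ) ∧
    eps a b 0 2 = ((if a = 3 ∧ b = 1 then 1 else if a = 1 ∧ b = 3 then -1 else 0 : ℤ) : ℝ) ∧
    eps a b 0 3 = ((if a = 1 ∧ b = 2 then 1 else if a = 2 ∧ b = 1 then -1 else 0 : ℤ) : ℝ) := by
  simp only [eps_eq_sum_sign, Int.cast_inj]
  revert a b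
  decide

theorem hodge2_apply_zero (F : Matrix (Fin 4) (Fin 4) ℂ) :
    hodge2 F 0 1 = (F 2 3 - F 3 2) / 2 ∧ hodge2 F 0 2 = (F 3 1 - F 1 3) / 2 ∧
    hodge2 F 0 3 = (F 1 2 - F 2 1) / 2 := by
  simp [hodge2, Fin.sum_univ_four, eps_apply_zero, ηM]
  refine ⟨?_, ?_, ?_⟩ <;> ring

theorem exists_eq_Fsym_of_transpose_eq_neg_of_hodge2_eq {F : Matrix (Fin 4) (Fin 4) ℂ}
    (hT : Fᵀ = -F) (hstar : hodge2 F = (-Complex.I) • F) : ∃ u v w, F = Fsym u v w := by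
  have hA (i j : Fin 4) : F j i = -F i j := by simpa using congrFun (congrFun hT i) j
  have hS (i j : Fin 4) : hodge2 F i j = -Complex.I * F i j := by
    simpa using congrFun (congrFun hstar i) j
  obtain ⟨h01, h02, h03⟩ := hodge2_apply_zero F
  have h23 : F 2 3 = -Complex.I * F 0 1 := by linear_combination hS 0 1 - h01 + hA 2 3 / 2
  have h13 : F 1 3 = Complex.I * F 0 2 := by linear_combination -hS 0 2 + h02 + hA 1 3 / 2
  have h12 : F 1 2 = -Complex.I * F 0 3 := by linear_combination hS 0 3 - h03 + hA 1 2 / 2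
  have hdiag (i : Fin 4) : F i i = 0 := by linear_combination hA i i / 2
  refine ⟨(F 0 1 - Complex.I * F 0 2) / 2, -(F 0 1 + Complex.I * F 0 2) / 2, -F 0 3 / 2, ?_⟩
  ext i j
  fin_cases i <;> fin_cases j <;>
    simp [Fsym, hdiag, h23, h13, h12, hA 0 1, hA 0 2, hA 0 3, hA 1 2, hA 1 3, hA 2 3] <;>
    grind [Complex.I_sq]

/-- Spinor representation of polarized degenerate 2-forms: every nonzero antisymmetric
complex 4×4 matrix F with ★F = −iF and det F = 0 is F(ξ) for some nonzero ξ ∈ ℂ²,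
and ξ is unique up to sign. -/
theorem polarized_degenerate_two_form_is_spinor_square :
    (∀ F : Matrix (Fin 4) (Fin 4) ℂ, F ≠ 0 → Fᵀ = -F →
      hodge2 F = (-Complex.I) • F → F.det = 0 →
      ∃ ξ : Fin 2 → ℂ, ξ ≠ 0 ∧ F = Fspin ξ) ∧
    (∀ ξ ξ' : Fin 2 → ℂ, ξ ≠ 0 → ξ' ≠ 0 →
      (Fspin ξ = Fspin ξ' ↔ ξ' = ξ ∨ ξ' = -ξ)) := by
  refine ⟨fun F hF0 hT hstar hdet => ?_, fun ξ ξ' _ _ => ?_⟩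
  · obtain ⟨u, v, w, rfl⟩ := exists_eq_Fsym_of_transpose_eq_neg_of_hodge2_eq hT hstar
    rw [det_Fsym] at hdet
    have hnull : w ^ 2 = u * v :=
      sub_eq_zero.1 <| pow_eq_zero_iff two_ne_zero |>.1 (by linear_combination -hdet / 16)
    obtain ⟨ξ, hu, hv, hw⟩ := exists_sq_sq_mul_eq_of_sq_eq_mul hnull
    have hFξ : Fsym u v w = Fspin ξ := by rw [Fspin_eq_Fsym, hu, hv, hw]
    refine ⟨ξ, ?_, hFξ⟩
    rintro rfl
    exact hF0 (hFξ.trans <| by ext; simp [Fspin])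
  · rw [Fspin_eq_Fsym, Fspin_eq_Fsym, Fsym_inj, sq_sq_mul_eq_iff_eq_or_eq_neg]
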